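/- For all real numbers a, b, c, the endomorphism-valued 2-form R = a·Π + b·Φ + c·Ψ satisfies the holomorphic pseudosymmetry identity R.R = (a + b/2)·(Π.R), where the dot denotes the derivation action of curvature-type tensors on each other. -/

import Mathlib

open scoped RealInnerProductSpace

noncomputable section

variable {V : Type*} [NormedAddCommGroup V] [InnerProductSpace ℝ V] [FiniteDimensional ℝ V]

/-- The orthogonal projection onto `D`, as a map `V → V`. -/
def projD (D : Submodule ℝ V) (X : V) : V := (Submodule.orthogonalProjectionOnto D X : V)

/-- The bilinear form `h(X,Y) = ⟪πX, πY⟫`. -/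
def hForm (D : Submodule ℝ V) (X Y : V) : ℝ := ⟪projD D X, projD D Y⟫

/-- The 2-form `ω(X,Y) = h(JX, Y)`. -/
def omForm (J : V →ₗ[ℝ] V) (D : Submodule ℝ V) (X Y : V) : ℝ := hForm D (J X) Y

/-- The standard Kähler curvature-type tensor `Π` of constant holomorphic sectional curvature. -/
def PiT (J : V →ₗ[ℝ] V) (U Vv W : V) : V :=
  (1/4 : ℝ) • (⟪Vv, W⟫ • U - ⟪U, W⟫ • Vv + ⟪J Vv, W⟫ • J U - ⟪J U, W⟫ • J Vv
    - (2 * ⟪J U, Vv⟫) • J W)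

/-- The curvature-type tensor `Φ`. -/
def PhiT (J : V →ₗ[ℝ] V) (D : Submodule ℝ V) (U Vv W : V) : V :=
  (1/8 : ℝ) • (⟪Vv, W⟫ • projD D U - ⟪U, W⟫ • projD D Vv
    + hForm D Vv W • U - hForm D U W • Vv
    + ⟪J Vv, W⟫ • projD D (J U) - ⟪J U, W⟫ • projD D (J Vv)
    + omForm J D Vv W • J U - omForm J D U W • J Vv
    - (2 * ⟪J U, Vv⟫) • projD D (J W) - (2 * omForm J D U Vv) • J W)

/-- The curvature-type tensor `Ψ(U,V)W = −ω(U,V)·J(πW)`. -/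
def PsiT (J : V →ₗ[ℝ] V) (D : Submodule ℝ V) (U Vv W : V) : V :=
  -(omForm J D U Vv) • J (projD D W)

/-- The derivation action of an endomorphism `A` on a bilinear form `T`. -/
def der2 (A : V → V) (T : V → V → ℝ) (X Y : V) : ℝ := -T (A X) Y - T X (A Y)

/-- The derivation action of an endomorphism `A` on a 4-multilinear form `T`. -/
def der4 (A : V → V) (T : V → V → V → V → ℝ) (X Y Z W : V) : ℝ :=
  -T (A X) Y Z W - T X (A Y) Z W - T X Y (A Z) W - T X Y Z (A W)

/-- The 4-form `S₀(X,Y,Z,W) = ⟪S(X,Y)Z, W⟫` associated with an endomorphism-valued 2-form. -/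
def form4 (S : V → V → V → V) (X Y Z W : V) : ℝ := ⟪S X Y Z, W⟫

/-- The 6-multilinear form `(R.S)(U,V,X,Y,Z,W) = (R(U,V).S₀)(X,Y,Z,W)`. -/
def dotRS (R S : V → V → V → V) (U Vv X Y Z W : V) : ℝ :=
  der4 (R U Vv) (form4 S) X Y Z W

/-! Write `R = aΠ + bΦ + cΨ`. For fixed `U, V` the endomorphism
`A = b(Φ(U,V) − ½Π(U,V)) + cΨ(U,V)` is skew-adjoint and commutes with `J` and with `π`, so it
preserves `⟪·,·⟫`, `⟪J·,·⟫`, `h` and `ω`; every term of `R₀` is a product of two of these forms,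
hence `A.R₀ = 0`. Since `R(U,V) = A + (a + b/2)Π(U,V)` and the action is linear in the
endomorphism, `R.R = (a + b/2)(Π.R)`. -/

set_option linter.unusedSectionVars false

def curvComb (J : V →ₗ[ℝ] V) (D : Submodule ℝ V) (a b c : ℝ) (U Vv W : V) : V :=
  a • PiT J U Vv W + b • PhiT J D U Vv W + c • PsiT J D U Vv W

/-- An element of the Lie algebra of the stabiliser of `(⟪·,·⟫, J, D)`. -/
structure IsInfinitesimalSymmetry (J : V →ₗ[ℝ] V) (D : Submodule ℝ V) (A : V → V) : Prop where
  inner_map_left : ∀ x y, ⟪A x, y⟫ = -⟪x, A y⟫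
  commute_J : Function.Commute A J
  commute_projD : Function.Commute A (projD D)

section

variable {J : V →ₗ[ℝ] V} {D : Submodule ℝ V}

lemma inner_map_left_eq_neg (hJ2 : ∀ X : V, J (J X) = -X) (hJg : ∀ X Y : V, ⟪J X, J Y⟫ = ⟪X, Y⟫)
    (x y : V) : ⟪J x, y⟫ = -⟪x, J y⟫ := by
  linarith [show -⟪J x, y⟫ = ⟪x, J y⟫ by simpa [hJ2] using hJg x (J y)]

@[simp] lemma projD_add (x y : V) : projD D (x + y) = projD D x + projD D y := by simp [projD]
@[simp] lemma projD_sub (x y : V) : projD D (x - y) = projD D x - projD D y := by simp [projD]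
@[simp] lemma projD_smul (r : ℝ) (x : V) : projD D (r • x) = r • projD D x := by simp [projD]
@[simp] lemma projD_neg (x : V) : projD D (-x) = -projD D x := by simp [projD]

lemma projD_mem (x : V) : projD D x ∈ D := (D.orthogonalProjectionOnto x).2

@[simp] lemma projD_projD (x : V) : projD D (projD D x) = projD D x :=
  D.starProjection_eq_self_iff.mpr (projD_mem x)

lemma inner_projD_left (x y : V) : ⟪projD D x, y⟫ = ⟪x, projD D y⟫ :=
  D.inner_starProjection_left_eq_right x y

lemma projD_map_of_mapsTo (hJ2 : ∀ X : V, J (J X) = -X) (hJg : ∀ X Y : V, ⟪J X, J Y⟫ = ⟪X, Y⟫)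
    (hJD : ∀ X ∈ D, J X ∈ D) (x : V) : projD D (J x) = J (projD D x) := by
  refine D.eq_starProjection_of_mem_of_inner_eq_zero (hJD _ (projD_mem x)) fun w hw => ?_
  rw [← map_sub, inner_map_left_eq_neg hJ2 hJg, neg_eq_zero]
  exact D.inner_left_of_mem_orthogonal (hJD w hw) (D.sub_starProjection_mem_orthogonal x)

theorem IsInfinitesimalSymmetry.der4_form4_curvComb {A : V → V}
    (hA : IsInfinitesimalSymmetry J D A) (a b c : ℝ) (X Y Z W : V) :
    der4 A (form4 (curvComb J D a b c)) X Y Z W = 0 := by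
  have hJ (x : V) : J (A x) = A (J x) := (hA.commute_J x).symm
  have hπ (x : V) : projD D (A x) = A (projD D x) := (hA.commute_projD x).symm
  simp only [der4, form4, curvComb, PiT, PhiT, PsiT, hForm, omForm, hJ, hπ, inner_add_left,
    inner_sub_left, real_inner_smul_left, hA.inner_map_left]
  ring

theorem IsInfinitesimalSymmetry.smul_add_smul {A B : V → V}
    (hA : IsInfinitesimalSymmetry J D A) (hB : IsInfinitesimalSymmetry J D B) (r s : ℝ) :
    IsInfinitesimalSymmetry J D (fun x => r • A x + s • B x) where
  inner_map_left x y := by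
    simp only [inner_add_left, inner_add_right, real_inner_smul_left, real_inner_smul_right,
      hA.inner_map_left, hB.inner_map_left]
    ring
  commute_J x := by simp only [map_add, map_smul, hA.commute_J x, hB.commute_J x]
  commute_projD x := by simp only [projD_add, projD_smul, hA.commute_projD x, hB.commute_projD x]

theorem isInfinitesimalSymmetry_PsiT (hJ2 : ∀ X : V, J (J X) = -X)
    (hJg : ∀ X Y : V, ⟪J X, J Y⟫ = ⟪X, Y⟫) (hJD : ∀ X ∈ D, J X ∈ D) (U Vv : V) :
    IsInfinitesimalSymmetry J D (PsiT J D U Vv) where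
  inner_map_left x y := by
    simp only [PsiT, real_inner_smul_left, real_inner_smul_right, inner_map_left_eq_neg hJ2 hJg,
      inner_projD_left, projD_map_of_mapsTo hJ2 hJg hJD]
    ring
  commute_J x := by simp [PsiT, projD_map_of_mapsTo hJ2 hJg hJD]
  commute_projD x := by simp [PsiT, projD_map_of_mapsTo hJ2 hJg hJD]

/-- Neither `Φ(U,V)` nor `Π(U,V)` commutes with `π`; this combination does. -/
theorem isInfinitesimalSymmetry_PhiT_sub_PiT (hJ2 : ∀ X : V, J (J X) = -X)
    (hJg : ∀ X Y : V, ⟪J X, J Y⟫ = ⟪X, Y⟫) (hJD : ∀ X ∈ D, J X ∈ D) (U Vv : V) :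
    IsInfinitesimalSymmetry J D (fun x => PhiT J D U Vv x - (1/2 : ℝ) • PiT J U Vv x) where
  inner_map_left x y := by
    have hJ : ⟪y, J x⟫ = -⟪x, J y⟫ := by
      rw [real_inner_comm, inner_map_left_eq_neg hJ2 hJg]
    have hJπ : ⟪y, J (projD D x)⟫ = -⟪x, J (projD D y)⟫ := by
      rw [real_inner_comm, inner_map_left_eq_neg hJ2 hJg, inner_projD_left,
        projD_map_of_mapsTo hJ2 hJg hJD]
    -- after moving `J` and `π` to the right, only `hJ` and `hJπ` relate the two sides
    rw [← real_inner_comm x]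
    simp only [PhiT, PiT, hForm, omForm, projD_map_of_mapsTo hJ2 hJg hJD, projD_projD,
      inner_add_left, inner_sub_left, real_inner_smul_left, inner_map_left_eq_neg hJ2 hJg,
      inner_projD_left, hJ, hJπ]
    ring
  commute_J x := by
    simp only [PhiT, PiT, hForm, omForm, projD_map_of_mapsTo hJ2 hJg hJD, map_add, map_sub,
      map_smul, hJ2, inner_neg_right, inner_map_left_eq_neg hJ2 hJg, inner_projD_left, projD_projD,
      projD_neg]
    module
  commute_projD x := by
    simp only [PhiT, PiT, hForm, omForm, projD_map_of_mapsTo hJ2 hJg hJD, projD_projD, projD_add,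
      projD_sub, projD_smul, inner_map_left_eq_neg hJ2 hJg, inner_projD_left]
    module

end

theorem der4_form4_add_smul (S : V → V → V → V) (A B : V → V) (r : ℝ)
    (h₁ : ∀ x y v w, S (x + r • y) v w = S x v w + r • S y v w)
    (h₂ : ∀ x y u w, S u (x + r • y) w = S u x w + r • S u y w)
    (h₃ : ∀ x y u v, S u v (x + r • y) = S u v x + r • S u v y) (X Y Z W : V) :
    der4 (fun x => A x + r • B x) (form4 S) X Y Z W
      = der4 A (form4 S) X Y Z W + r * der4 B (form4 S) X Y Z W := by
  simp only [der4, form4, h₁, h₂, h₃, inner_add_left, inner_add_right, real_inner_smul_left,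
    real_inner_smul_right]
  ring

section

variable (J : V →ₗ[ℝ] V) (D : Submodule ℝ V) (a b c : ℝ)

theorem curvComb_add_smul_left (r : ℝ) (x y v w : V) :
    curvComb J D a b c (x + r • y) v w
      = curvComb J D a b c x v w + r • curvComb J D a b c y v w := by
  simp only [curvComb, PiT, PhiT, PsiT, omForm, hForm, map_add, map_smul, projD_add, projD_smul,
    inner_add_left, real_inner_smul_left]
  module

theorem curvComb_add_smul_middle (r : ℝ) (x y u w : V) :
    curvComb J D a b c u (x + r • y) w
      = curvComb J D a b c u x w + r • curvComb J D a b c u y w := by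
  simp only [curvComb, PiT, PhiT, PsiT, omForm, hForm, map_add, map_smul, projD_add, projD_smul,
    inner_add_left, inner_add_right, real_inner_smul_left, real_inner_smul_right]
  module

theorem curvComb_add_smul_right (r : ℝ) (x y u v : V) :
    curvComb J D a b c u v (x + r • y)
      = curvComb J D a b c u v x + r • curvComb J D a b c u v y := by
  simp only [curvComb, PiT, PhiT, PsiT, omForm, hForm, map_add, map_smul, projD_add, projD_smul,
    inner_add_right, real_inner_smul_right]
  module

end

theorem stmt_0_general {V : Type*} [NormedAddCommGroup V] [InnerProductSpace ℝ V]
    [FiniteDimensional ℝ V]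
    (J : V →ₗ[ℝ] V) (hJ2 : ∀ X : V, J (J X) = -X)
    (hJg : ∀ X Y : V, ⟪J X, J Y⟫ = ⟪X, Y⟫)
    (D : Submodule ℝ V)
    (hJD : ∀ X ∈ D, J X ∈ D) :
    ∀ a b c : ℝ, ∀ U Vv X Y Z W : V,
      dotRS (fun P Q W0 => a • PiT J P Q W0 + b • PhiT J D P Q W0 + c • PsiT J D P Q W0)
        (fun P Q W0 => a • PiT J P Q W0 + b • PhiT J D P Q W0 + c • PsiT J D P Q W0) U Vv X Y Z W
      = (a + b / 2) *
        dotRS (PiT J) (fun P Q W0 => a • PiT J P Q W0 + b • PhiT J D P Q W0 + c • PsiT J D P Q W0) U Vv X Y Z W := by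
  intro a b c U Vv X Y Z W
  change dotRS (curvComb J D a b c) (curvComb J D a b c) U Vv X Y Z W
    = (a + b / 2) * dotRS (PiT J) (curvComb J D a b c) U Vv X Y Z W
  set A : V → V := fun x => b • (PhiT J D U Vv x - (1/2 : ℝ) • PiT J U Vv x) + c • PsiT J D U Vv x
  have hA : IsInfinitesimalSymmetry J D A :=
    (isInfinitesimalSymmetry_PhiT_sub_PiT hJ2 hJg hJD U Vv).smul_add_smul
      (isInfinitesimalSymmetry_PsiT hJ2 hJg hJD U Vv) b c
  have hsplit : curvComb J D a b c U Vv = fun x => A x + (a + b / 2) • PiT J U Vv x := by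
    funext x
    simp only [curvComb, A]
    module
  rw [dotRS, hsplit, der4_form4_add_smul _ _ _ _ (curvComb_add_smul_left J D a b c _)
    (curvComb_add_smul_middle J D a b c _) (curvComb_add_smul_right J D a b c _),
    hA.der4_form4_curvComb, zero_add, dotRS]

theorem stmt_0 {V : Type*} [NormedAddCommGroup V] [InnerProductSpace ℝ V]
    [FiniteDimensional ℝ V]
    (J : V →ₗ[ℝ] V) (hJ2 : ∀ X : V, J (J X) = -X)
    (hJg : ∀ X Y : V, ⟪J X, J Y⟫ = ⟪X, Y⟫)
    (D : Submodule ℝ V) (hD2 : Module.finrank ℝ ↥D = 2)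
    (hJD : ∀ X ∈ D, J X ∈ D) :
    ∀ a b c : ℝ, ∀ U Vv X Y Z W : V,
      dotRS (fun P Q W0 => a • PiT J P Q W0 + b • PhiT J D P Q W0 + c • PsiT J D P Q W0)
        (fun P Q W0 => a • PiT J P Q W0 + b • PhiT J D P Q W0 + c • PsiT J D P Q W0) U Vv X Y Z W
      = (a + b / 2) *
        dotRS (PiT J) (fun P Q W0 => a • PiT J P Q W0 + b • PhiT J D P Q W0 + c • PsiT J D P Q W0) U Vv X Y Z W :=
  stmt_0_general J hJ2 hJg D hJD
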